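/- arXiv:2509.17257 — 4 statements merged into one kernel-verified Lean document; each statement's English description precedes it below -/
import Mathlib

section
/- The labels of the leaves of a block tree for cluster trees T_I and T_J form a disjoint partition of the product index set I × J. -/
variable {I : Type} [DecidableEq I]

inductive CTree (I : Type) where
  | node : Finset I → List (CTree I) → CTree I

namespace CTree

def label : CTree I → Finset I
  | node l _ => l

def sonsOf : CTree I → List (CTree I)
  | node _ s => s

def leaves : CTree I → List (Finset I)
  | node l [] => [l]
  | node _ (s :: ss) => (s :: ss).attach.flatMap fun c => c.1.leaves
decreasing_by
  have h := List.sizeOf_lt_of_mem c.2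
  simp at h ⊢
  omega

inductive Valid : CTree I → Prop where
  | leaf : ∀ l, Valid (node l [])
  | internal : ∀ l sons, sons ≠ [] →
      l = sons.foldr (fun s acc => s.label ∪ acc) ∅ →
      sons.Pairwise (fun a b => Disjoint a.label b.label) →
      (∀ s ∈ sons, Valid s) → Valid (node l sons)

inductive Subtree : CTree I → CTree I → Prop where
  | refl : ∀ t, Subtree t t
  | son : ∀ {t s : CTree I} {l : Finset I} {sons : List (CTree I)},
      s ∈ sons → Subtree t s → Subtree t (node l sons)

end CTree

variable {I : Type} [DecidableEq I] {J : Type} [DecidableEq J]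

namespace CTree

/-- The list of pairs of clusters forming the sons of a block `(t, s)` in a block tree. -/
def blockSons (t : CTree I) (s : CTree J) : List (CTree I × CTree J) :=
  match t.sonsOf, s.sonsOf with
  | [], [] => []
  | [], s' :: ss => (s' :: ss).map (fun c => (t, c))
  | t' :: ts, [] => (t' :: ts).map (fun c => (c, s))
  | t' :: ts, s' :: ss => (t' :: ts).flatMap (fun c => (s' :: ss).map (fun d => (c, d)))

/-- `IsBlockTree t s B` : `B` is a block tree for the cluster trees `t` and `s`.
Its nodes correspond to pairs `(t', s')` of clusters and carry the label `t̂' × ŝ'`;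
the sons of an internal block are given by `blockSons`. -/
inductive IsBlockTree : CTree I → CTree J → CTree (I × J) → Prop where
  | leaf : ∀ (t : CTree I) (s : CTree J),
      IsBlockTree t s (.node (t.label ×ˢ s.label) [])
  | node : ∀ (t : CTree I) (s : CTree J) (f : CTree I × CTree J → CTree (I × J)),
      blockSons t s ≠ [] →
      (∀ p ∈ blockSons t s, IsBlockTree p.1 p.2 (f p)) →
      IsBlockTree t s (.node (t.label ×ˢ s.label) ((blockSons t s).map f))

/-- `SubtreeDepth t T d` : `t` is a node of the tree `T` at depth `d`. -/
inductive SubtreeDepth : CTree I → CTree I → ℕ → Prop where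
  | refl : ∀ t, SubtreeDepth t t 0
  | son : ∀ {t s : CTree I} {n : ℕ} {l : Finset I} {sons : List (CTree I)},
      s ∈ sons → SubtreeDepth t s n → SubtreeDepth t (node l sons) (n + 1)

end CTree

section Aux

variable {I : Type} [DecidableEq I] {J : Type} [DecidableEq J]

open CTree

lemma aux_countP_flatMap {α β : Type*} (l : List α) (f : α → List β) (q : β → Bool) :
    (l.flatMap f).countP q = (l.map (fun a => (f a).countP q)).sum := by
  induction l with
  | nil => simp
  | cons a l ih => simp [List.countP_append, ih]

lemma aux_mem_foldr (L : List (Finset I)) (x : I) :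
    x ∈ L.foldr (· ∪ ·) ∅ ↔ ∃ c ∈ L, x ∈ c := by
  induction L with
  | nil => simp
  | cons a L ih => simp [ih]

lemma aux_sum_indicator (L : List (Finset I)) (x : I)
    (hd : L.Pairwise Disjoint) :
    (L.map (fun c => if x ∈ c then 1 else 0)).sum = if x ∈ L.foldr (· ∪ ·) ∅ then 1 else 0 := by
  induction L with
  | nil => simp
  | cons a L ih =>
    rcases List.pairwise_cons.1 hd with ⟨ha, hL⟩
    by_cases hx : x ∈ a
    · have h0 : ∀ c ∈ L, x ∉ c := fun c hc => Finset.disjoint_left.1 (ha c hc) hx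
      have : x ∉ L.foldr (· ∪ ·) ∅ := by
        rw [aux_mem_foldr]; rintro ⟨c, hc, hxc⟩; exact h0 c hc hxc
      simp [ih hL, hx, this]
    · simp [ih hL, hx]

lemma aux_sum_flatMap {α : Type*} (l : List α) (f : α → List ℕ) :
    (l.flatMap f).sum = (l.map (fun a => (f a).sum)).sum := by
  induction l with
  | nil => simp
  | cons a l ih => simp [ih]

lemma aux_leaves_eq (l : Finset I) (sons : List (CTree I)) (h : sons ≠ []) :
    (CTree.node l sons).leaves = sons.flatMap CTree.leaves := by
  cases sons with
  | nil => exact absurd rfl h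
  | cons a s =>
    rw [CTree.leaves]
    simp [List.flatMap]

lemma aux_valid_son {t c : CTree I} (h : t.Valid) (hc : c ∈ t.sonsOf) : c.Valid := by
  cases h with
  | leaf l => simp [sonsOf] at hc
  | internal l sons hne hl hd hv => exact hv c hc

lemma aux_sonsSum {t : CTree I} (ht : t.Valid) (hne : t.sonsOf ≠ []) (x : I) :
    (t.sonsOf.map (fun c => if x ∈ c.label then (1:ℕ) else 0)).sum
      = if x ∈ t.label then 1 else 0 := by
  cases ht with
  | leaf l => simp [sonsOf] at hne
  | internal l sons hne' hl hd hv =>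
    have hd' : (sons.map CTree.label).Pairwise Disjoint := List.Pairwise.map _ (fun a b h => h) hd
    have this := aux_sum_indicator (sons.map CTree.label) x hd'
    rw [List.map_map] at this
    show (List.map (fun c : CTree I => if x ∈ c.label then (1:ℕ) else 0) sons).sum
      = if x ∈ l then 1 else 0
    rw [show (fun c : CTree I => if x ∈ c.label then (1:ℕ) else 0)
        = ((fun c : Finset I => if x ∈ c then (1:ℕ) else 0) ∘ CTree.label) from rfl]
    rw [this, List.foldr_map, ← hl]

lemma aux_prod_ind (a : Finset I) (b : Finset J) (p : I × J) :
    (if p ∈ a ×ˢ b then (1:ℕ) else 0)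
      = (if p.1 ∈ a then (1:ℕ) else 0) * (if p.2 ∈ b then (1:ℕ) else 0) := by
  by_cases h1 : p.1 ∈ a <;> by_cases h2 : p.2 ∈ b <;> simp [Finset.mem_product, h1, h2]

lemma aux_blockSum (t : CTree I) (s : CTree J) (ht : t.Valid) (hs : s.Valid)
    (hne : blockSons t s ≠ []) (p : I × J) :
    ((blockSons t s).map (fun c => if p ∈ c.1.label ×ˢ c.2.label then (1:ℕ) else 0)).sum
      = if p ∈ t.label ×ˢ s.label then 1 else 0 := by
  rw [aux_prod_ind]
  have key : ∀ c : CTree I × CTree J,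
      (fun c : CTree I × CTree J => if p ∈ c.1.label ×ˢ c.2.label then (1:ℕ) else 0) c
        = (if p.1 ∈ c.1.label then (1:ℕ) else 0) * (if p.2 ∈ c.2.label then (1:ℕ) else 0) :=
    fun c => aux_prod_ind _ _ _
  unfold blockSons at hne ⊢
  rcases hts : t.sonsOf with _ | ⟨t', ts⟩ <;> rcases hss : s.sonsOf with _ | ⟨s', ss⟩
  · simp [hts, hss] at hne
  · -- t leaf, s internal
    have := aux_sonsSum hs (by rw [hss]; simp) p.2
    rw [hss] at this
    simp only [List.map_map]
    rw [show ((fun c : CTree I × CTree J => if p ∈ c.1.label ×ˢ c.2.label then (1:ℕ) else 0)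
        ∘ (fun c => (t, c))) = (fun c : CTree J =>
          (if p.1 ∈ t.label then (1:ℕ) else 0) * (if p.2 ∈ c.label then (1:ℕ) else 0)) by
        funext c; exact aux_prod_ind _ _ _]
    rw [List.sum_map_mul_left, this]
  · -- s leaf, t internal
    have := aux_sonsSum ht (by rw [hts]; simp) p.1
    rw [hts] at this
    simp only [List.map_map]
    rw [show ((fun c : CTree I × CTree J => if p ∈ c.1.label ×ˢ c.2.label then (1:ℕ) else 0)
        ∘ (fun c => (c, s))) = (fun c : CTree I =>
          (if p.1 ∈ c.label then (1:ℕ) else 0) * (if p.2 ∈ s.label then (1:ℕ) else 0)) by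
        funext c; exact aux_prod_ind _ _ _]
    rw [List.sum_map_mul_right, this]
  · -- both internal
    have hT := aux_sonsSum ht (by rw [hts]; simp) p.1
    have hS := aux_sonsSum hs (by rw [hss]; simp) p.2
    rw [hts] at hT; rw [hss] at hS
    rw [List.map_flatMap]
    rw [aux_sum_flatMap]
    rw [show (fun c : CTree I =>
        (((s' :: ss).map fun d => (c, d)).map
          (fun c : CTree I × CTree J => if p ∈ c.1.label ×ˢ c.2.label then (1:ℕ) else 0)).sum)
        = (fun c : CTree I => (if p.1 ∈ c.label then (1:ℕ) else 0)
            * (if p.2 ∈ s.label then 1 else 0)) by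
        funext c
        rw [List.map_map]
        rw [show ((fun q : CTree I × CTree J => if p ∈ q.1.label ×ˢ q.2.label then (1:ℕ) else 0)
            ∘ (fun d => (c, d))) = (fun d : CTree J =>
              (if p.1 ∈ c.label then (1:ℕ) else 0) * (if p.2 ∈ d.label then (1:ℕ) else 0)) by
            funext d; exact aux_prod_ind _ _ _]
        rw [List.sum_map_mul_left, hS]]
    rw [List.sum_map_mul_right, hT]

lemma aux_block_mem {t : CTree I} {s : CTree J} {c : CTree I × CTree J}
    (hc : c ∈ blockSons t s) :
    (c.1 = t ∨ c.1 ∈ t.sonsOf) ∧ (c.2 = s ∨ c.2 ∈ s.sonsOf) := by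
  unfold blockSons at hc
  rcases hts : t.sonsOf with _ | ⟨t', ts⟩ <;> rcases hss : s.sonsOf with _ | ⟨s', ss⟩ <;>
    rw [hts, hss] at hc
  · simp at hc
  · rcases List.mem_map.1 hc with ⟨d, hd, rfl⟩
    exact ⟨Or.inl rfl, Or.inr hd⟩
  · rcases List.mem_map.1 hc with ⟨d, hd, rfl⟩
    exact ⟨Or.inr hd, Or.inl rfl⟩
  · rcases List.mem_flatMap.1 hc with ⟨a, ha, hm⟩
    rcases List.mem_map.1 hm with ⟨b, hb, rfl⟩
    exact ⟨Or.inr ha, Or.inr hb⟩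

lemma aux_main {t : CTree I} {s : CTree J} {B : CTree (I × J)}
    (hB : IsBlockTree t s B) (ht : t.Valid) (hs : s.Valid) (p : I × J) :
    B.leaves.countP (fun l => decide (p ∈ l)) = if p ∈ t.label ×ˢ s.label then 1 else 0 := by
  induction hB generalizing p with
  | leaf t s =>
    rw [CTree.leaves]
    by_cases h : p ∈ t.label ×ˢ s.label <;> simp [h]
  | node t s f hne hsons ih =>
    have hmne : (blockSons t s).map f ≠ [] := by
      intro h; exact hne (List.map_eq_nil_iff.1 h)
    rw [aux_leaves_eq _ _ hmne, aux_countP_flatMap, List.map_map]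
    have key : ∀ c ∈ blockSons t s,
        ((fun a : CTree (I × J) => a.leaves.countP (fun l => decide (p ∈ l))) ∘ f) c
          = if p ∈ c.1.label ×ˢ c.2.label then 1 else 0 := by
      intro c hc
      rcases aux_block_mem hc with ⟨h1, h2⟩
      have hv1 : c.1.Valid := by
        rcases h1 with h | h
        · rw [h]; exact ht
        · exact aux_valid_son ht h
      have hv2 : c.2.Valid := by
        rcases h2 with h | h
        · rw [h]; exact hs
        · exact aux_valid_son hs h
      exact ih c hc hv1 hv2 p
    rw [List.map_congr_left key]
    exact aux_blockSum t s ht hs hne p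

end Aux
open CTree in
/-- The labels of the leaves of a block tree for cluster trees `T_I` and `T_J`
form a disjoint partition of the product index set `I × J`. -/
theorem block_tree_leaves_partition {I : Type} [DecidableEq I] [Fintype I]
    {J : Type} [DecidableEq J] [Fintype J]
    (TI : CTree I) (TJ : CTree J) (B : CTree (I × J))
    (hTI : TI.Valid) (hTJ : TJ.Valid)
    (hI : TI.label = Finset.univ) (hJ : TJ.label = Finset.univ)
    (hB : IsBlockTree TI TJ B) :
    ∀ p : I × J, B.leaves.countP (fun l => decide (p ∈ l)) = 1 := by
  intro p
  rw [aux_main hB hTI hTJ p, hI, hJ]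
  simp
end

section
/- Let G be a matrix indexed by I × J and let L be the set of leaves of a block tree for I and J. Then for any vectors x and y, the bilinear form y* G x equals the sum over leaves b = (t,s) ∈ L of y|_t̂ * G|_{t̂ × ŝ} x|_ŝ, i.e., G decomposes as a direct sum of its sub-blocks on the leaf partition. -/
variable {I : Type} [DecidableEq I]

variable {I : Type} [DecidableEq I] {J : Type} [DecidableEq J]

section Helpers

open CTree

private lemma leaves_node_ne {l : Finset I} {sons : List (CTree I)} (h : sons ≠ []) :
    (CTree.node l sons).leaves = sons.flatMap CTree.leaves := by
  cases sons with
  | nil => exact absurd rfl h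
  | cons a as =>
    rw [CTree.leaves]
    rw [show (a :: as).attach.flatMap (fun c => c.1.leaves)
        = ((a :: as).attach.map Subtype.val).flatMap CTree.leaves by
      rw [List.flatMap_map]]
    rw [List.attach_map_subtype_val]

private lemma sum_map_flatMap {α β M : Type*} [AddCommMonoid M] (L : List α) (g : α → List β)
    (h : β → M) : ((L.flatMap g).map h).sum = (L.map (fun a => ((g a).map h).sum)).sum := by
  induction L with
  | nil => simp
  | cons a as ih => simp [ih]

private lemma list_finset_swap {α β M : Type*} [AddCommMonoid M] (L : List α) (A : Finset β)
    (g : α → β → M) :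
    (L.map (fun c => ∑ i ∈ A, g c i)).sum = ∑ i ∈ A, (L.map (fun c => g c i)).sum := by
  induction L with
  | nil => simp
  | cons a as ih => simp [ih, Finset.sum_add_distrib]

private lemma disj_foldr (c : Finset I) : ∀ (L : List (CTree I)),
    (∀ b ∈ L, Disjoint c b.label) →
    Disjoint c (L.foldr (fun s acc => s.label ∪ acc) ∅)
  | [], _ => by simp
  | b :: bs, h => by
    simp only [List.foldr_cons, Finset.disjoint_union_right]
    exact ⟨h b (by simp), disj_foldr c bs (fun x hx => h x (by simp [hx]))⟩

private lemma foldr_sum {M : Type*} [AddCommMonoid M] (g : I → M) :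
    ∀ (L : List (CTree I)), L.Pairwise (fun a b => Disjoint a.label b.label) →
    (L.map (fun c => ∑ i ∈ c.label, g i)).sum
      = ∑ i ∈ L.foldr (fun s acc => s.label ∪ acc) ∅, g i
  | [], _ => by simp
  | c :: cs, h => by
    rw [List.pairwise_cons] at h
    have hd : Disjoint c.label (cs.foldr (fun s acc => s.label ∪ acc) ∅) :=
      disj_foldr c.label cs h.1
    simp only [List.map_cons, List.sum_cons, List.foldr_cons]
    rw [Finset.sum_union hd, foldr_sum g cs h.2]

private lemma valid_sons {t : CTree I} (h : t.Valid) : ∀ c ∈ t.sonsOf, c.Valid := by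
  cases h with
  | leaf l => simp [CTree.sonsOf]
  | internal l sons _ _ _ hv => exact hv

variable {J : Type} [DecidableEq J]

private lemma prod_partition_right {M : Type*} [AddCommMonoid M] (f : I × J → M) (A : Finset I)
    (L : List (CTree J)) (hL : L.Pairwise (fun a b => Disjoint a.label b.label)) :
    (L.map (fun c => ∑ q ∈ A ×ˢ c.label, f q)).sum
      = ∑ q ∈ A ×ˢ (L.foldr (fun s acc => s.label ∪ acc) ∅), f q := by
  simp only [Finset.sum_product]
  rw [list_finset_swap]
  exact Finset.sum_congr rfl fun i _ => foldr_sum (fun j => f (i, j)) L hL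

private lemma prod_partition_left {M : Type*} [AddCommMonoid M] (f : I × J → M) (A : Finset J)
    (L : List (CTree I)) (hL : L.Pairwise (fun a b => Disjoint a.label b.label)) :
    (L.map (fun c => ∑ q ∈ c.label ×ˢ A, f q)).sum
      = ∑ q ∈ (L.foldr (fun s acc => s.label ∪ acc) ∅) ×ˢ A, f q := by
  simp only [Finset.sum_product_right]
  rw [list_finset_swap]
  exact Finset.sum_congr rfl fun j _ => foldr_sum (fun i => f (i, j)) L hL

private lemma key {M : Type*} [AddCommMonoid M] (f : I × J → M) :
    ∀ {t : CTree I} {s : CTree J} {B : CTree (I × J)}, IsBlockTree t s B →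
      t.Valid → s.Valid →
      (B.leaves.map (fun l => ∑ p ∈ l, f p)).sum = ∑ p ∈ t.label ×ˢ s.label, f p := by
  intro t s B hB
  induction hB with
  | leaf t s => intro _ _; simp [CTree.leaves]
  | node t s F hne hsons IH =>
    intro ht hs
    have hmapne : (blockSons t s).map F ≠ [] := by
      simpa using hne
    rw [leaves_node_ne hmapne, sum_map_flatMap, List.map_map]
    have hstep : ((blockSons t s).map (fun p => (((F p).leaves).map
        (fun l => ∑ q ∈ l, f q)).sum)).sum
        = ((blockSons t s).map (fun p => ∑ q ∈ p.1.label ×ˢ p.2.label, f q)).sum := by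
      congr 1
      apply List.map_congr_left
      intro p hp
      have h1 : p.1.Valid := by
        obtain ⟨lt, ts⟩ := t
        obtain ⟨ls, ss⟩ := s
        unfold blockSons at hp
        cases ts with
        | nil =>
          cases ss with
          | nil => simp [CTree.sonsOf] at hp
          | cons d ds =>
            simp only [CTree.sonsOf, List.mem_map] at hp
            obtain ⟨c, _, rfl⟩ := hp; exact ht
        | cons a as =>
          cases ss with
          | nil =>
            simp only [CTree.sonsOf, List.mem_map] at hp
            obtain ⟨c, hc, rfl⟩ := hp
            exact valid_sons ht c hc
          | cons d ds =>
            simp only [CTree.sonsOf, List.mem_flatMap, List.mem_map] at hp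
            obtain ⟨c, hc, _, _, h⟩ := hp
            rw [← h]
            exact valid_sons ht c hc
      have h2 : p.2.Valid := by
        obtain ⟨lt, ts⟩ := t
        obtain ⟨ls, ss⟩ := s
        unfold blockSons at hp
        cases ts with
        | nil =>
          cases ss with
          | nil => simp [CTree.sonsOf] at hp
          | cons d ds =>
            simp only [CTree.sonsOf, List.mem_map] at hp
            obtain ⟨c, hc, rfl⟩ := hp
            exact valid_sons hs c hc
        | cons a as =>
          cases ss with
          | nil =>
            simp only [CTree.sonsOf, List.mem_map] at hp
            obtain ⟨c, hc, rfl⟩ := hp; exact hs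
          | cons d ds =>
            simp only [CTree.sonsOf, List.mem_flatMap, List.mem_map] at hp
            obtain ⟨c, hc, e, he, h⟩ := hp
            rw [← h]
            exact valid_sons hs e he
      exact IH p hp h1 h2
    have goal2 : ((blockSons t s).map (fun p => ∑ q ∈ p.1.label ×ˢ p.2.label, f q)).sum
        = ∑ p ∈ t.label ×ˢ s.label, f p := by
      obtain ⟨lt, ts⟩ := t
      obtain ⟨ls, ss⟩ := s
      cases ts with
      | nil =>
        cases ss with
        | nil => exact absurd (show blockSons (CTree.node lt []) (CTree.node ls []) = [] from rfl) hne
        | cons d ds =>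
          obtain ⟨he, hp⟩ : ls = (d :: ds).foldr (fun s acc => s.label ∪ acc) ∅ ∧
              (d :: ds).Pairwise (fun a b => Disjoint a.label b.label) := by
            cases hs with
            | internal _ _ _ he hp _ => exact ⟨he, hp⟩
          show (((d :: ds).map (fun c => (CTree.node lt [], c))).map
            (fun p => ∑ q ∈ p.1.label ×ˢ p.2.label, f q)).sum = _
          rw [List.map_map]
          have := prod_partition_right f (CTree.node lt ([] : List (CTree I))).label (d :: ds) hp
          simp only [Function.comp_def] at this ⊢
          rw [this, CTree.label, CTree.label, ← he]
      | cons a as =>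
        cases ss with
        | nil =>
          obtain ⟨he, hp⟩ : lt = (a :: as).foldr (fun s acc => s.label ∪ acc) ∅ ∧
              (a :: as).Pairwise (fun x y => Disjoint x.label y.label) := by
            cases ht with
            | internal _ _ _ he hp _ => exact ⟨he, hp⟩
          show (((a :: as).map (fun c => (c, CTree.node ls ([] : List (CTree J))))).map
            (fun p => ∑ q ∈ p.1.label ×ˢ p.2.label, f q)).sum = _
          rw [List.map_map]
          have := prod_partition_left f (CTree.node ls ([] : List (CTree J))).label (a :: as) hp
          simp only [Function.comp_def] at this ⊢
          rw [this, CTree.label, CTree.label, ← he]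
        | cons d ds =>
          obtain ⟨heI, hpI⟩ : lt = (a :: as).foldr (fun s acc => s.label ∪ acc) ∅ ∧
              (a :: as).Pairwise (fun x y => Disjoint x.label y.label) := by
            cases ht with
            | internal _ _ _ he hp _ => exact ⟨he, hp⟩
          obtain ⟨heJ, hpJ⟩ : ls = (d :: ds).foldr (fun s acc => s.label ∪ acc) ∅ ∧
              (d :: ds).Pairwise (fun x y => Disjoint x.label y.label) := by
            cases hs with
            | internal _ _ _ he hp _ => exact ⟨he, hp⟩
          show (((a :: as).flatMap (fun c => (d :: ds).map (fun e => (c, e)))).map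
            (fun p => ∑ q ∈ p.1.label ×ˢ p.2.label, f q)).sum = _
          rw [sum_map_flatMap]
          have hinner : ∀ c : CTree I, (((d :: ds).map (fun e => (c, e))).map
              (fun p => ∑ q ∈ p.1.label ×ˢ p.2.label, f q)).sum
              = ∑ q ∈ c.label ×ˢ ls, f q := by
            intro c
            rw [List.map_map]
            have := prod_partition_right f c.label (d :: ds) hpJ
            simp only [Function.comp_def] at this ⊢
            rw [this, ← heJ]
          simp only [hinner]
          rw [prod_partition_left f ls (a :: as) hpI, CTree.label, CTree.label, ← heI]
    simpa only [Function.comp_def] using hstep.trans goal2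

end Helpers

open CTree Matrix in
/-- For a matrix `G` indexed by `I × J` and the leaves of a block tree for `I` and `J`,
the bilinear form `y* G x` equals the sum over the leaves `b = (t, s)` of the partial
bilinear forms `y|_t̂* G|_{t̂ × ŝ} x|_ŝ` : the matrix decomposes as a direct sum of its
sub-blocks over the leaf partition. -/
theorem block_tree_bilinear_decomposition {I : Type} [DecidableEq I] [Fintype I]
    {J : Type} [DecidableEq J] [Fintype J]
    (TI : CTree I) (TJ : CTree J) (B : CTree (I × J))
    (hTI : TI.Valid) (hTJ : TJ.Valid)
    (hI : TI.label = Finset.univ) (hJ : TJ.label = Finset.univ)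
    (hB : IsBlockTree TI TJ B)
    (G : Matrix I J ℂ) (x : J → ℂ) (y : I → ℂ) :
    star y ⬝ᵥ G.mulVec x =
      (B.leaves.map (fun l =>
        ∑ p ∈ l, (starRingEnd ℂ) (y p.1) * G p.1 p.2 * x p.2)).sum := by
  rw [key (fun p : I × J => (starRingEnd ℂ) (y p.1) * G p.1 p.2 * x p.2) hB hTI hTJ, hI, hJ]
  simp [dotProduct, mulVec, Finset.mul_sum, Fintype.sum_prod_type, mul_assoc]
end

section
/- The forward transformation is correct: for a nested cluster basis (W_s) with transfer matrices (E_s), the recursively computed coefficients satisfy x̂_s = W_s* (x restricted to ŝ) for every cluster s, where at leaves x̂_s := W_s* x|_ŝ and at internal nodes x̂_s := Σ_{s' ∈ sons(s)} E_{s'}* x̂_{s'}. -/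
variable {I : Type} [DecidableEq I]

variable {I : Type} [DecidableEq I] [Fintype I] {k : ℕ}

namespace CTree

/-- Forward transformation: recursively computes the transformed coefficient vectors
`x̂_s`. At a leaf, `x̂_s := W_s* x|_ŝ`; at an internal node,
`x̂_s := Σ_{s' ∈ sons(s)} E_{s'}* x̂_{s'}`. -/
noncomputable def forward (W : CTree I → Matrix I (Fin k) ℂ)
    (E : CTree I → Matrix (Fin k) (Fin k) ℂ) (x : I → ℂ) : CTree I → Fin k → ℂ
  | node l [] =>
      (W (node l [])).conjTranspose.mulVec (fun i => if i ∈ l then x i else 0)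
  | node _ (s :: ss) =>
      ((s :: ss).attach.map
        (fun c => (E c.1).conjTranspose.mulVec (forward W E x c.1))).sum
decreasing_by
  have h := List.sizeOf_lt_of_mem c.2
  simp at h ⊢
  omega

/-- Backward transformation: given the coefficient vectors `ŷ` and the accumulated
coefficient `c` at the current node, at an internal node it adds `E_{t'} c` to
`ŷ_{t'}` and recurses; at a leaf it returns the (zero-padded) vector `V_t c`.
The result is the total contribution added to the output vector `y`. -/
noncomputable def backward (V : CTree I → Matrix I (Fin k) ℂ)
    (E : CTree I → Matrix (Fin k) (Fin k) ℂ) (yhat : CTree I → Fin k → ℂ) :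
    CTree I → (Fin k → ℂ) → I → ℂ
  | node l [], c => (V (node l [])).mulVec c
  | node _ (s :: ss), c =>
      ((s :: ss).attach.map
        (fun d => backward V E yhat d.1 (yhat d.1 + (E d.1).mulVec c))).sum
decreasing_by
  have h := List.sizeOf_lt_of_mem d.2
  simp at h ⊢
  omega

/-- The list of all nodes of a tree. -/
def nodesList : CTree I → List (CTree I)
  | node l ss => node l ss :: ss.attach.flatMap (fun s => nodesList s.1)
decreasing_by
  have h := List.sizeOf_lt_of_mem s.2
  simp at h ⊢
  omega

end CTree

/-!
Induction over the cluster tree. At an internal cluster `s`, nestedness turns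
`E_{s'}* (W_{s'}* x|_{ŝ'})` into `W_s* x|_{ŝ'}`, and since `ŝ` is the disjoint union of the
clusters of its sons, `x|_ŝ = Σ_{s'} x|_{ŝ'}`.
-/

open scoped Matrix

theorem Finset.disjoint_foldr_union {ι : Type*} [DecidableEq ι] {t : Finset ι}
    {L : List (Finset ι)} (h : ∀ u ∈ L, Disjoint t u) : Disjoint t (L.foldr (· ∪ ·) ∅) := by
  induction L with
  | nil => exact Finset.disjoint_empty_right t
  | cons u us ih =>
    rw [List.forall_mem_cons] at h
    exact Finset.disjoint_union_right.mpr ⟨h.1, ih h.2⟩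

theorem ite_mem_foldr_union_eq_sum {ι M : Type*} [DecidableEq ι] [AddCommMonoid M] (x : ι → M)
    {L : List (Finset ι)} (hL : L.Pairwise Disjoint) :
    (fun i => if i ∈ L.foldr (· ∪ ·) ∅ then x i else 0) =
      (L.map fun t i => if i ∈ t then x i else 0).sum := by
  induction L with
  | nil => funext i; simp
  | cons t ts ih =>
    rw [List.pairwise_cons] at hL
    have hdisj := Finset.disjoint_foldr_union hL.1
    rw [List.map_cons, List.sum_cons, ← ih hL.2]
    funext i
    simp only [List.foldr_cons, Finset.mem_union, Pi.add_apply]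
    by_cases hi : i ∈ t
    · simp [hi, Finset.disjoint_left.mp hdisj hi]
    · simp [hi]

theorem Matrix.mulVec_list_sum {m n α : Type*} [Fintype n] [NonUnitalNonAssocSemiring α]
    (A : Matrix m n α) (L : List (n → α)) : A *ᵥ L.sum = (L.map (A *ᵥ ·)).sum := by
  induction L with
  | nil => exact Matrix.mulVec_zero A
  | cons v vs ih => rw [List.sum_cons, Matrix.mulVec_add, ih, List.map_cons, List.sum_cons]

theorem Matrix.conjTranspose_mulVec_ite_mem_congr {m n α : Type*} [Fintype m] [DecidableEq m]
    [NonUnitalNonAssocSemiring α] [Star α] {A B : Matrix m n α} {t : Finset m}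
    (h : ∀ i ∈ t, ∀ j, A i j = B i j) (x : m → α) :
    Aᴴ *ᵥ (fun i => if i ∈ t then x i else 0) = Bᴴ *ᵥ (fun i => if i ∈ t then x i else 0) := by
  funext j
  simp only [Matrix.mulVec, dotProduct, Matrix.conjTranspose_apply]
  refine Finset.sum_congr rfl fun i _ => ?_
  split_ifs with hi
  · rw [h i hi j]
  · simp

theorem Matrix.conjTranspose_mulVec_conjTranspose_mulVec_ite_mem {m n α : Type*} [Fintype m]
    [Fintype n] [DecidableEq m] [NonUnitalSemiring α] [StarRing α] {W W' : Matrix m n α}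
    {E : Matrix n n α} {t : Finset m} (h : ∀ i ∈ t, ∀ j, W i j = (W' * E) i j) (x : m → α) :
    Eᴴ *ᵥ (W'ᴴ *ᵥ fun i => if i ∈ t then x i else 0) = Wᴴ *ᵥ fun i => if i ∈ t then x i else 0 := by
  rw [Matrix.mulVec_mulVec, ← Matrix.conjTranspose_mul]
  exact Matrix.conjTranspose_mulVec_ite_mem_congr (fun i hi j => (h i hi j).symm) x

namespace CTree

theorem forward_node_cons (W : CTree I → Matrix I (Fin k) ℂ)
    (E : CTree I → Matrix (Fin k) (Fin k) ℂ) (x : I → ℂ) (l : Finset I) (c : CTree I)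
    (cs : List (CTree I)) :
    forward W E x (node l (c :: cs)) = ((c :: cs).map fun d => (E d)ᴴ *ᵥ forward W E x d).sum := by
  rw [forward]
  exact congrArg List.sum (List.attach_map_val (f := fun d => (E d)ᴴ *ᵥ forward W E x d))

end CTree

open CTree in
theorem forward_correct_general {I : Type} [DecidableEq I] [Fintype I] {k : ℕ}
    (s : CTree I) (hs : s.Valid)
    (W : CTree I → Matrix I (Fin k) ℂ) (E : CTree I → Matrix (Fin k) (Fin k) ℂ)
    (hnested : ∀ u : CTree I, u.Subtree s → ∀ u' ∈ u.sonsOf,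
      ∀ i ∈ u'.label, ∀ j : Fin k, W u i j = (W u' * E u') i j)
    (x : I → ℂ) :
    forward W E x s =
      (W s).conjTranspose.mulVec (fun i => if i ∈ s.label then x i else 0) := by
  induction hs with
  | leaf l => rw [forward]; rfl
  | internal l sons hne hl hdisj _ ih =>
    obtain ⟨c, cs, rfl⟩ := List.exists_cons_of_ne_nil hne
    have hson : ∀ d ∈ c :: cs, (E d)ᴴ *ᵥ forward W E x d =
        (W (node l (c :: cs)))ᴴ *ᵥ fun i => if i ∈ d.label then x i else 0 := fun d hd => by
      rw [ih d hd fun u hu => hnested u (.son hd hu)]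
      exact Matrix.conjTranspose_mulVec_conjTranspose_mulVec_ite_mem
        (hnested _ (.refl _) d hd) x
    rw [forward_node_cons, List.map_congr_left hson, label, hl, ← List.foldr_map,
      ite_mem_foldr_union_eq_sum x (List.pairwise_map.mpr hdisj), Matrix.mulVec_list_sum,
      List.map_map, List.map_map]
    rfl

open CTree in
/-- Correctness of the forward transformation: for a nested cluster basis `(W_s)` with
transfer matrices `(E_s)`, the recursively computed coefficients satisfy
`x̂_s = W_s* x|_ŝ` for every cluster `s`. -/
theorem forward_correct {I : Type} [DecidableEq I] [Fintype I] {k : ℕ}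
    (s : CTree I) (hs : s.Valid)
    (W : CTree I → Matrix I (Fin k) ℂ) (E : CTree I → Matrix (Fin k) (Fin k) ℂ)
    (hsupp : ∀ u : CTree I, u.Subtree s → ∀ i ∉ u.label, ∀ j : Fin k, W u i j = 0)
    (hnested : ∀ u : CTree I, u.Subtree s → ∀ u' ∈ u.sonsOf,
      ∀ i ∈ u'.label, ∀ j : Fin k, W u i j = (W u' * E u') i j)
    (x : I → ℂ) :
    forward W E x s =
      (W s).conjTranspose.mulVec (fun i => if i ∈ s.label then x i else 0) :=
  forward_correct_general s hs W E hnested x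
end

section
/- The backward transformation is correct: given coefficient vectors (ŷ_t) for a nested cluster basis (V_t) with transfer matrices (E_t), the recursive procedure that at internal nodes adds E_{t'} ŷ_t to ŷ_{t'} and at leaves adds V_t ŷ_t to y|_t̂ computes a vector equal to y plus the sum over all clusters t ∈ T_I of the zero-padded vector V_t ŷ_t. -/
variable {I : Type} [DecidableEq I]

variable {I : Type} [DecidableEq I] [Fintype I] {k : ℕ}

namespace CTree

theorem Subtree.trans' {a b c : CTree I} (hab : Subtree a b) (hbc : Subtree b c) :
    Subtree a c := by
  induction hbc with
  | refl => exact hab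
  | son hmem _ ih => exact Subtree.son hmem ih

theorem mem_foldr_union (i : I) (L : List (CTree I)) :
    i ∈ L.foldr (fun s acc => s.label ∪ acc) ∅ ↔ ∃ d ∈ L, i ∈ d.label := by
  induction L with
  | nil => simp
  | cons a L ih => simp [ih]

theorem list_sum_apply {α : Type*} (L : List α) (f : α → I → ℂ) (i : I) :
    ((L.map f).sum) i = (L.map (fun a => f a i)).sum := by
  induction L with
  | nil => simp
  | cons a L ih => simp [ih]

theorem my_sum_map_add {α γ : Type*} [AddCommMonoid γ] (L : List α) (f g : α → γ) :
    (L.map (fun a => f a + g a)).sum = (L.map f).sum + (L.map g).sum := by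
  induction L with
  | nil => simp
  | cons a L ih =>
    simp only [List.map_cons, List.sum_cons, ih]
    abel

theorem my_sum_map_flatMap {α β γ : Type*} [AddCommMonoid γ] (L : List α)
    (g : α → List β) (f : β → γ) :
    ((L.flatMap g).map f).sum = (L.map (fun a => ((g a).map f).sum)).sum := by
  induction L with
  | nil => simp
  | cons a L ih => simp [ih]

theorem my_attach_map_sum {α γ : Type*} [AddCommMonoid γ] (L : List α) (f : α → γ) :
    (L.attach.map (fun d => f d.1)).sum = (L.map f).sum := by
  rw [List.attach_map_val]

theorem backward_key {I : Type} [DecidableEq I] [Fintype I] {k : ℕ}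
    (T : CTree I)
    (V : CTree I → Matrix I (Fin k) ℂ) (E : CTree I → Matrix (Fin k) (Fin k) ℂ)
    (hsupp : ∀ u : CTree I, u.Subtree T → ∀ i ∉ u.label, ∀ j : Fin k, V u i j = 0)
    (hnested : ∀ u : CTree I, u.Subtree T → ∀ u' ∈ u.sonsOf,
      ∀ i ∈ u'.label, ∀ j : Fin k, V u i j = (V u' * E u') i j)
    (yhat : CTree I → Fin k → ℂ) :
    ∀ n (t : CTree I), sizeOf t ≤ n → t.Valid → t.Subtree T → ∀ c : Fin k → ℂ,
      backward V E yhat t c =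
        (V t).mulVec c +
          (((nodesList t).tail).map (fun u => (V u).mulVec (yhat u))).sum := by
  intro n
  induction n with
  | zero => intro t hle; cases t with | node l ss => simp at hle
  | succ n ih =>
    intro t hle ht hsub c
    cases t with
    | node l ss =>
      cases ss with
      | nil =>
        simp [backward, nodesList]
      | cons s ss =>
        -- internal node
        have hsons : ∀ d ∈ s :: ss, sizeOf d ≤ n := by
          intro d hd
          have h := List.sizeOf_lt_of_mem hd
          simp at h hle ⊢
          omega
        have hvalid : ∀ d ∈ s :: ss, d.Valid := by
          cases ht with
          | internal _ _ _ _ _ hv => exact hv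
        have hsubd : ∀ d ∈ s :: ss, d.Subtree T :=
          fun d hd => Subtree.trans' (Subtree.son hd (Subtree.refl d)) hsub
        have hlab : l = (s :: ss).foldr (fun s acc => s.label ∪ acc) ∅ := by
          cases ht with
          | internal _ _ _ he _ _ => exact he
        have hpw : (s :: ss).Pairwise (fun a b => Disjoint a.label b.label) := by
          cases ht with
          | internal _ _ _ _ hp _ => exact hp
        rw [backward]
        have hrec : ∀ d ∈ s :: ss,
            backward V E yhat d (yhat d + (E d).mulVec c) =
              (V d).mulVec (yhat d) + (V d).mulVec ((E d).mulVec c) +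
                (((nodesList d).tail).map (fun u => (V u).mulVec (yhat u))).sum := by
          intro d hd
          rw [ih d (hsons d hd) (hvalid d hd) (hsubd d hd)]
          rw [Matrix.mulVec_add]
        -- key matrix identity
        have hkey : ((s :: ss).map (fun d => (V d).mulVec ((E d).mulVec c))).sum =
            (V (node l (s :: ss))).mulVec c := by
          funext i
          rw [list_sum_apply]
          by_cases hi : i ∈ l
          · -- i lies in exactly one son
            rw [hlab, mem_foldr_union] at hi
            have main : ∀ (L : List (CTree I)), (∀ d ∈ L, d ∈ s :: ss) →
                L.Pairwise (fun a b => Disjoint a.label b.label) →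
                (∃ d ∈ L, i ∈ d.label) →
                (L.map (fun d => (V d).mulVec ((E d).mulVec c) i)).sum =
                  ((V (node l (s :: ss))).mulVec c) i := by
              intro L
              induction L with
              | nil => intro _ _ hex; simp at hex
              | cons a L ihL =>
                intro hmem hpwL hex
                by_cases ha : i ∈ a.label
                · have hz : ∀ d ∈ L, i ∉ d.label := by
                    intro d hd hid
                    have hdis := (List.pairwise_cons.mp hpwL).1 d hd
                    exact (Finset.disjoint_left.mp hdis) ha hid
                  have hrest : (L.map (fun d => (V d).mulVec ((E d).mulVec c) i)).sum = 0 := by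
                    apply List.sum_eq_zero
                    intro x hx
                    simp only [List.mem_map] at hx
                    obtain ⟨d, hd, rfl⟩ := hx
                    have hVz : ∀ m, V d i m = 0 :=
                      fun m => hsupp d (hsubd d (hmem d (List.mem_cons_of_mem a hd))) i (hz d hd) m
                    simp [Matrix.mulVec, dotProduct, hVz]
                  rw [List.map_cons, List.sum_cons, hrest, add_zero]
                  have hn := hnested (node l (s :: ss)) hsub a
                    (by simpa [sonsOf] using hmem a (List.mem_cons_self)) i ha
                  rw [Matrix.mulVec_mulVec]
                  simp only [Matrix.mulVec, dotProduct]
                  exact Finset.sum_congr rfl (fun j _ => by rw [(hn j).symm])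
                · have hVz : ∀ m, V a i m = 0 :=
                    fun m => hsupp a (hsubd a (hmem a (List.mem_cons_self))) i ha m
                  have haz : (V a).mulVec ((E a).mulVec c) i = 0 := by
                    simp [Matrix.mulVec, dotProduct, hVz]
                  rw [List.map_cons, List.sum_cons, haz, zero_add]
                  apply ihL (fun d hd => hmem d (List.mem_cons_of_mem a hd))
                    (List.pairwise_cons.mp hpwL).2
                  rcases hex with ⟨d, hd, hid⟩
                  rcases List.mem_cons.mp hd with rfl | hd'
                  · exact absurd hid ha
                  · exact ⟨d, hd', hid⟩
            exact main (s :: ss) (fun d hd => hd) hpw hi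
          · -- i outside l: everything vanishes
            have hz : ∀ d ∈ s :: ss, i ∉ d.label := by
              intro d hd hid
              exact hi (hlab ▸ (mem_foldr_union i (s :: ss)).mpr ⟨d, hd, hid⟩)
            have h1 : ((s :: ss).map (fun d => (V d).mulVec ((E d).mulVec c) i)).sum = 0 := by
              apply List.sum_eq_zero
              intro x hx
              simp only [List.mem_map] at hx
              obtain ⟨d, hd, rfl⟩ := hx
              have hVz : ∀ m, V d i m = 0 :=
                fun m => hsupp d (hsubd d hd) i (hz d hd) m
              simp [Matrix.mulVec, dotProduct, hVz]
            have h2 : ((V (node l (s :: ss))).mulVec c) i = 0 := by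
              have hVz : ∀ m, V (node l (s :: ss)) i m = 0 :=
                fun m => hsupp _ hsub i (by simpa [label] using hi) m
              simp [Matrix.mulVec, dotProduct, hVz]
            rw [h1, h2]
        -- assemble
        have hstep : ((s :: ss).attach.map
            (fun d => backward V E yhat d.1 (yhat d.1 + (E d.1).mulVec c))).sum =
            ((s :: ss).attach.map (fun d => (V d.1).mulVec ((E d.1).mulVec c) +
              ((nodesList d.1).map (fun u => (V u).mulVec (yhat u))).sum)).sum := by
          congr 1
          apply List.map_congr_left
          intro d _
          rw [hrec d.1 d.2]
          obtain ⟨d, hd⟩ := d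
          cases d with
          | node l' ss' =>
            simp only
            rw [nodesList]
            simp only [List.map_cons, List.sum_cons, List.tail_cons]
            abel
        rw [hstep, my_sum_map_add]
        congr 1
        · rw [my_attach_map_sum (s :: ss) (fun d => (V d).mulVec ((E d).mulVec c))]
          exact hkey
        · rw [nodesList]
          simp only [List.tail_cons]
          rw [my_sum_map_flatMap]

end CTree

open CTree in
/-- Correctness of the backward transformation: given coefficient vectors `(ŷ_t)` for a
nested cluster basis `(V_t)` with transfer matrices `(E_t)`, the recursive procedure that
at internal nodes adds `E_{t'} ŷ_t` to `ŷ_{t'}` and at leaves adds `V_t ŷ_t` to `y|_t̂`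
outputs exactly `y` plus the sum over all clusters `t` of the zero-padded vectors
`V_t ŷ_t`. -/
theorem backward_correct {I : Type} [DecidableEq I] [Fintype I] {k : ℕ}
    (T : CTree I) (hT : T.Valid)
    (V : CTree I → Matrix I (Fin k) ℂ) (E : CTree I → Matrix (Fin k) (Fin k) ℂ)
    (hsupp : ∀ u : CTree I, u.Subtree T → ∀ i ∉ u.label, ∀ j : Fin k, V u i j = 0)
    (hnested : ∀ u : CTree I, u.Subtree T → ∀ u' ∈ u.sonsOf,
      ∀ i ∈ u'.label, ∀ j : Fin k, V u i j = (V u' * E u') i j)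
    (yhat : CTree I → Fin k → ℂ) (y : I → ℂ) :
    y + backward V E yhat T (yhat T) =
      y + ((nodesList T).map (fun t => (V t).mulVec (yhat t))).sum := by
  congr 1
  rw [backward_key T V E hsupp hnested yhat (sizeOf T) T le_rfl hT (Subtree.refl T) (yhat T)]
  cases T with
  | node l ss =>
    rw [nodesList]
    simp only [List.map_cons, List.sum_cons, List.tail_cons]
end
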